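/- Let f' : GL(d,ℝ) → ℝ be an invariant function with variation function F', let ε₁,…,ε_k ∈ {±1}, and define f : GL(d,ℝ)^k → ℝ by f(g₁,…,g_k) = f'(g₁^{ε₁}·g₂^{ε₂}⋯g_k^{ε_k}); then f is an invariant function, and for every index i with ε_i = 1, its i-th variation function is given by F_i(g₁,…,g_k) = F'(g_i·g_{i+1}^{ε_{i+1}}⋯g_k^{ε_k}·g₁^{ε₁}⋯g_{i−1}^{ε_{i−1}}). -/

import Mathlib

open Matrix

attribute [local instance] Matrix.normedAddCommGroup Matrix.normedSpace

noncomputable section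

/-- An invariant multi-function on `GL(d,ℝ)^k`: a real-valued function on `k`-tuples of
`d × d` real matrices that is differentiable on the open set of tuples of invertible
matrices and invariant under the diagonal action of `GL(d,ℝ)` by conjugation. -/
def IsInvariantFun (d k : ℕ) (f : (Fin k → Matrix (Fin d) (Fin d) ℝ) → ℝ) : Prop :=
  DifferentiableOn ℝ f {g : Fin k → Matrix (Fin d) (Fin d) ℝ | ∀ i, IsUnit (g i)} ∧
  ∀ h : Matrix (Fin d) (Fin d) ℝ, IsUnit h →
    ∀ g : Fin k → Matrix (Fin d) (Fin d) ℝ, (∀ i, IsUnit (g i)) →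
      f (fun i => h * g i * h⁻¹) = f g

/-- `F` is the tuple of variation functions of `f` with respect to the trace form
`𝔅(X,Y) = tr (X*Y)`: the matrix `F j g` satisfies that `tr (F j g * X)` is the derivative
at `t = 0` of `t ↦ f (g₁, …, exp(tX)·g_j, …, g_k)`, for every `X`. -/
def IsVariationFun (d k : ℕ) (f : (Fin k → Matrix (Fin d) (Fin d) ℝ) → ℝ)
    (F : Fin k → (Fin k → Matrix (Fin d) (Fin d) ℝ) → Matrix (Fin d) (Fin d) ℝ) : Prop :=
  ∀ (j : Fin k) (g : Fin k → Matrix (Fin d) (Fin d) ℝ), (∀ i, IsUnit (g i)) →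
    ∀ X : Matrix (Fin d) (Fin d) ℝ,
      HasDerivAt
        (fun t : ℝ => f (Function.update g j (NormedSpace.exp (t • X) * g j)))
        (Matrix.trace (F j g * X)) 0

/-- An invariant function on `GL(d,ℝ)`: a real-valued function on `d × d` real matrices
that is differentiable on the open set of invertible matrices and invariant under
conjugation. -/
def IsInvariantFunOne (d : ℕ) (f : Matrix (Fin d) (Fin d) ℝ → ℝ) : Prop :=
  DifferentiableOn ℝ f {g : Matrix (Fin d) (Fin d) ℝ | IsUnit g} ∧
  ∀ h : Matrix (Fin d) (Fin d) ℝ, IsUnit h →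
    ∀ g : Matrix (Fin d) (Fin d) ℝ, IsUnit g → f (h * g * h⁻¹) = f g

/-- `F` is the variation function of `f : GL(d,ℝ) → ℝ` with respect to the trace form:
`tr (F g * X)` is the derivative at `t = 0` of `t ↦ f (exp(tX)·g)`, for every `X`. -/
def IsVariationFunOne (d : ℕ) (f : Matrix (Fin d) (Fin d) ℝ → ℝ)
    (F : Matrix (Fin d) (Fin d) ℝ → Matrix (Fin d) (Fin d) ℝ) : Prop :=
  ∀ g : Matrix (Fin d) (Fin d) ℝ, IsUnit g → ∀ X : Matrix (Fin d) (Fin d) ℝ,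
    HasDerivAt (fun t : ℝ => f (NormedSpace.exp (t • X) * g))
      (Matrix.trace (F g * X)) 0

/-- The word map `(g₁, …, g_k) ↦ g₁^{ε₁} · g₂^{ε₂} ⋯ g_k^{ε_k}` on tuples of matrices. -/
def wordProd {d k : ℕ} (ε : Fin k → ℤ) (g : Fin k → Matrix (Fin d) (Fin d) ℝ) :
    Matrix (Fin d) (Fin d) ℝ :=
  (List.ofFn fun i => g i ^ ε i).prod

/-!
Conjugation commutes with products and integer powers of matrices, so the word map is
equivariant and `f' ∘ wordProd ε` is invariant; it is differentiable because matrix inversion is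
(Cramer's rule). If `ε i = 1`, replacing `g i` by `exp (t • X) * g i` turns the word `P * g i * S`
into `P * (exp (t • X) * g i) * S`, which is conjugate by `P` to `exp (t • X) * (g i * S * P)`.
Invariance of `f'` therefore identifies the `i`-th variation with `F'` at the rotated word, and
the trace form is nondegenerate.
-/

section MatrixCalculus

variable {𝕜 E : Type*} [NontriviallyNormedField 𝕜] [NormedAddCommGroup E] [NormedSpace 𝕜 E]
  {m n p : Type*} [Fintype n] {x : E}

theorem Matrix.differentiableAt_iff {u : E → Matrix m n 𝕜} :
    DifferentiableAt 𝕜 u x ↔ ∀ i j, DifferentiableAt 𝕜 (fun y => u y i j) x :=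
  differentiableAt_pi.trans (forall_congr' fun _ => differentiableAt_pi)

theorem DifferentiableAt.matrix_mul [Fintype p] {u : E → Matrix m n 𝕜} {v : E → Matrix n p 𝕜}
    (hu : DifferentiableAt 𝕜 u x) (hv : DifferentiableAt 𝕜 v x) :
    DifferentiableAt 𝕜 (fun y => u y * v y) x := by
  rw [Matrix.differentiableAt_iff] at hu hv ⊢
  intro i j
  simp only [Matrix.mul_apply]
  exact DifferentiableAt.fun_sum fun l _ => (hu i l).mul (hv l j)

variable [DecidableEq n]

theorem DifferentiableAt.matrix_det {u : E → Matrix n n 𝕜} (hu : DifferentiableAt 𝕜 u x) :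
    DifferentiableAt 𝕜 (fun y => (u y).det) x := by
  rw [Matrix.differentiableAt_iff] at hu
  simp only [Matrix.det_apply, Units.smul_def, zsmul_eq_mul]
  exact DifferentiableAt.fun_sum fun σ _ => (differentiableAt_const _).mul
    (HasFDerivAt.finsetProd fun i _ => (hu (σ i) i).hasFDerivAt).differentiableAt

theorem DifferentiableAt.matrix_adjugate {u : E → Matrix n n 𝕜}
    (hu : DifferentiableAt 𝕜 u x) : DifferentiableAt 𝕜 (fun y => (u y).adjugate) x := by
  refine Matrix.differentiableAt_iff.2 fun i j => ?_
  simp only [Matrix.adjugate_apply]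
  refine DifferentiableAt.matrix_det (Matrix.differentiableAt_iff.2 fun a b => ?_)
  simp only [Matrix.updateRow_apply]
  split_ifs
  · exact differentiableAt_const _
  · exact Matrix.differentiableAt_iff.1 hu a b

theorem DifferentiableAt.matrix_inv {u : E → Matrix n n 𝕜} (hu : DifferentiableAt 𝕜 u x)
    (hx : IsUnit (u x)) : DifferentiableAt 𝕜 (fun y => (u y)⁻¹) x := by
  have hdet : (u x).det ≠ 0 := ((Matrix.isUnit_iff_isUnit_det _).1 hx).ne_zero
  simp only [Matrix.inv_def, Ring.inverse_eq_inv']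
  exact (hu.matrix_det.inv hdet).smul hu.matrix_adjugate

theorem DifferentiableAt.matrix_pow {u : E → Matrix n n 𝕜} (hu : DifferentiableAt 𝕜 u x) :
    ∀ k : ℕ, DifferentiableAt 𝕜 (fun y => u y ^ k) x
  | 0 => by simpa only [pow_zero] using differentiableAt_const 1
  | k + 1 => by simpa only [pow_succ] using (hu.matrix_pow k).matrix_mul hu

theorem DifferentiableAt.matrix_zpow {u : E → Matrix n n 𝕜} (hu : DifferentiableAt 𝕜 u x)
    (hx : IsUnit (u x)) (e : ℤ) : DifferentiableAt 𝕜 (fun y => u y ^ e) x := by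
  obtain ⟨k, rfl | rfl⟩ := Int.eq_nat_or_neg e
  · simpa only [zpow_natCast] using hu.matrix_pow k
  · simp only [Matrix.zpow_neg_natCast]
    exact (hu.matrix_pow k).matrix_inv (hx.pow k)

theorem DifferentiableAt.matrix_prod_ofFn {k : ℕ} {u : Fin k → E → Matrix n n 𝕜}
    (hu : ∀ l, DifferentiableAt 𝕜 (u l) x) :
    DifferentiableAt 𝕜 (fun y => (List.ofFn fun l => u l y).prod) x := by
  induction k with
  | zero => simpa only [List.ofFn_zero, List.prod_nil] using differentiableAt_const 1
  | succ k ih =>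
    simpa only [List.ofFn_succ, List.prod_cons] using
      (hu 0).matrix_mul (ih fun l => hu l.succ)

theorem Matrix.isOpen_setOf_isUnit : IsOpen {g : Matrix n n 𝕜 | IsUnit g} := by
  simp only [Matrix.isUnit_iff_isUnit_det, isUnit_iff_ne_zero]
  exact isOpen_ne.preimage (continuous_id.matrix_det)

end MatrixCalculus

section Conjugation

variable {n R : Type*} [Fintype n] [DecidableEq n] [CommRing R] {h : Matrix n n R}

theorem Matrix.conj_zpow (hh : IsUnit h) (a : Matrix n n R) (e : ℤ) :
    (h * a * h⁻¹) ^ e = h * a ^ e * h⁻¹ := by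
  obtain ⟨u, rfl⟩ := hh
  have hconj (k : ℕ) :
      ((u : Matrix n n R) * a * (u : Matrix n n R)⁻¹) ^ k = u * a ^ k * (u : Matrix n n R)⁻¹ := by
    simpa only [Matrix.coe_units_inv] using Units.conj_pow u a k
  obtain ⟨k, rfl | rfl⟩ := Int.eq_nat_or_neg e
  · simpa only [zpow_natCast] using hconj k
  · rw [Matrix.zpow_neg_natCast, Matrix.zpow_neg_natCast, hconj, Matrix.mul_inv_rev,
      Matrix.mul_inv_rev, ← Matrix.coe_units_inv, ← Matrix.coe_units_inv, inv_inv,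
      Matrix.coe_units_inv, Matrix.mul_assoc]

theorem Matrix.conj_list_prod (hh : IsUnit h) (l : List (Matrix n n R)) :
    (l.map fun a => h * a * h⁻¹).prod = h * l.prod * h⁻¹ := by
  have hdet := (Matrix.isUnit_iff_isUnit_det h).1 hh
  induction l with
  | nil => simp [Matrix.mul_nonsing_inv _ hdet]
  | cons a l ih =>
    rw [List.map_cons, List.prod_cons, ih, List.prod_cons]
    simp only [Matrix.mul_assoc, Matrix.nonsing_inv_mul_cancel_left _ _ hdet]

end Conjugation

section WordMap

variable {d k : ℕ} {ε : Fin k → ℤ} {g : Fin k → Matrix (Fin d) (Fin d) ℝ}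

theorem isUnit_of_mem_ofFn_zpow (hg : ∀ l, IsUnit (g l)) :
    ∀ a ∈ List.ofFn (fun l => g l ^ ε l), IsUnit a := by
  simp only [List.mem_ofFn, forall_exists_index]
  rintro _ l rfl
  exact (Matrix.isUnit_iff_isUnit_det _).2
    (((Matrix.isUnit_iff_isUnit_det _).1 (hg l)).det_zpow (ε l))

theorem isUnit_wordProd (hg : ∀ l, IsUnit (g l)) : IsUnit (wordProd ε g) :=
  List.prod_isUnit (isUnit_of_mem_ofFn_zpow hg)

theorem differentiableAt_wordProd (hg : ∀ l, IsUnit (g l)) :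
    DifferentiableAt ℝ (wordProd ε) g :=
  DifferentiableAt.matrix_prod_ofFn fun l =>
    (differentiableAt_apply l g).matrix_zpow (hg l) (ε l)

theorem wordProd_conj {h : Matrix (Fin d) (Fin d) ℝ} (hh : IsUnit h) :
    wordProd ε (fun l => h * g l * h⁻¹) = h * wordProd ε g * h⁻¹ := by
  simp only [wordProd, Matrix.conj_zpow hh, ← Matrix.conj_list_prod hh, List.map_ofFn,
    Function.comp_def]

theorem wordProd_update (i : Fin k) (x : Matrix (Fin d) (Fin d) ℝ) :
    wordProd ε (Function.update g i x) =
      ((List.ofFn fun l => g l ^ ε l).take i).prod * x ^ ε i *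
        ((List.ofFn fun l => g l ^ ε l).drop (i + 1)).prod := by
  have hset : (List.ofFn fun l => Function.update g i x l ^ ε l) =
      (List.ofFn fun l => g l ^ ε l).set i (x ^ ε i) := by
    refine List.ext_getElem (by simp) fun j hj _ => ?_
    simp only [List.getElem_ofFn, List.getElem_set, Function.update_apply]
    split_ifs with h₁ h₂ h₂
    · rw [h₁]
    · exact absurd (congrArg Fin.val h₁).symm h₂
    · exact absurd (Fin.ext h₂.symm) h₁
    · rfl
  rw [wordProd, hset, List.prod_set]
  simp

end WordMap

theorem IsVariationFunOne.hasDerivAt_mul_mul {d : ℕ} {f' : Matrix (Fin d) (Fin d) ℝ → ℝ}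
    {F' : Matrix (Fin d) (Fin d) ℝ → Matrix (Fin d) (Fin d) ℝ} (hF' : IsVariationFunOne d f' F')
    (hf' : ∀ h : Matrix (Fin d) (Fin d) ℝ, IsUnit h →
      ∀ g : Matrix (Fin d) (Fin d) ℝ, IsUnit g → f' (h * g * h⁻¹) = f' g)
    {T D g : Matrix (Fin d) (Fin d) ℝ} (hT : IsUnit T) (hD : IsUnit D) (hg : IsUnit g)
    (X : Matrix (Fin d) (Fin d) ℝ) :
    HasDerivAt (fun t : ℝ => f' (T * (NormedSpace.exp (t • X) * g) * D))
      (Matrix.trace (F' (g * D * T) * X)) 0 := by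
  have hTT : T * T⁻¹ = 1 := Matrix.mul_nonsing_inv _ ((Matrix.isUnit_iff_isUnit_det T).1 hT)
  have hconj (t : ℝ) : f' (T * (NormedSpace.exp (t • X) * g) * D) =
      f' (NormedSpace.exp (t • X) * (g * D * T)) := by
    rw [← hf' T hT _ ((Matrix.isUnit_exp _).mul ((hg.mul hD).mul hT))]
    simp only [Matrix.mul_assoc, hTT, Matrix.mul_one]
  simpa only [hconj] using hF' _ ((hg.mul hD).mul hT) X

theorem variation_of_word_function_positive_exponent_general (d k : ℕ)
    (f' : Matrix (Fin d) (Fin d) ℝ → ℝ)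
    (F' : Matrix (Fin d) (Fin d) ℝ → Matrix (Fin d) (Fin d) ℝ)
    (hf' : IsInvariantFunOne d f') (hF' : IsVariationFunOne d f' F')
    (ε : Fin k → ℤ) :
    IsInvariantFun d k (fun g => f' (wordProd ε g)) ∧
    ∀ F : Fin k → (Fin k → Matrix (Fin d) (Fin d) ℝ) → Matrix (Fin d) (Fin d) ℝ,
      IsVariationFun d k (fun g => f' (wordProd ε g)) F →
        ∀ i : Fin k, ε i = 1 →
          ∀ g : Fin k → Matrix (Fin d) (Fin d) ℝ, (∀ l, IsUnit (g l)) →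
            F i g = F' (g i * ((List.ofFn fun l => g l ^ ε l).drop ((i : ℕ) + 1)).prod *
              ((List.ofFn fun l => g l ^ ε l).take (i : ℕ)).prod) := by
  refine ⟨⟨fun g hg => ?_, fun h hh g hg => ?_⟩, fun F hF i hi g hg => ?_⟩
  · have hunit := isUnit_wordProd (ε := ε) hg
    exact ((hf'.1 _ hunit).differentiableAt (Matrix.isOpen_setOf_isUnit.mem_nhds hunit)).comp g
      (differentiableAt_wordProd hg) |>.differentiableWithinAt
  · simp only [wordProd_conj hh, hf'.2 h hh _ (isUnit_wordProd hg)]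
  · refine Matrix.ext_iff_trace_mul_right.2 fun X => (hF i g hg X).unique ?_
    simp only [wordProd_update, hi, zpow_one]
    exact hF'.hasDerivAt_mul_mul hf'.2
      (List.prod_isUnit fun a ha => isUnit_of_mem_ofFn_zpow hg a (List.mem_of_mem_take ha))
      (List.prod_isUnit fun a ha => isUnit_of_mem_ofFn_zpow hg a (List.mem_of_mem_drop ha))
      (hg i) X

/-- if `f'` is an invariant function on `GL(d,ℝ)` with variation function `F'`,
`ε_i ∈ {±1}`, and `f (g₁,…,g_k) = f' (g₁^{ε₁} ⋯ g_k^{ε_k})`, then `f` is an invariant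
multi-function, and for every index `i` with `ε_i = 1` its `i`-th variation function is
`F_i (g₁,…,g_k) = F' (g_i · g_{i+1}^{ε_{i+1}} ⋯ g_k^{ε_k} · g₁^{ε₁} ⋯ g_{i-1}^{ε_{i-1}})`. -/
theorem variation_of_word_function_positive_exponent (d k : ℕ)
    (f' : Matrix (Fin d) (Fin d) ℝ → ℝ)
    (F' : Matrix (Fin d) (Fin d) ℝ → Matrix (Fin d) (Fin d) ℝ)
    (hf' : IsInvariantFunOne d f') (hF' : IsVariationFunOne d f' F')
    (ε : Fin k → ℤ) (hε : ∀ i, ε i = 1 ∨ ε i = -1) :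
    IsInvariantFun d k (fun g => f' (wordProd ε g)) ∧
    ∀ F : Fin k → (Fin k → Matrix (Fin d) (Fin d) ℝ) → Matrix (Fin d) (Fin d) ℝ,
      IsVariationFun d k (fun g => f' (wordProd ε g)) F →
        ∀ i : Fin k, ε i = 1 →
          ∀ g : Fin k → Matrix (Fin d) (Fin d) ℝ, (∀ l, IsUnit (g l)) →
            F i g = F' (g i * ((List.ofFn fun l => g l ^ ε l).drop ((i : ℕ) + 1)).prod *
              ((List.ofFn fun l => g l ^ ε l).take (i : ℕ)).prod) :=
  variation_of_word_function_positive_exponent_general d k f' F' hf' hF' ε
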